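/- Let θi(u1,u2,u3) for i=1,2,3 denote the inner angles of the triangle formed by three mutually externally tangent circles of radii e^{u1}, e^{u2}, e^{u3}. Then for i ≠ j, ∂θi/∂uj = ∂θj/∂ui (symmetry of the Jacobian of the angle map). -/

import Mathlib

/-!
At the vertex of radius `a` of the triangle with sides `a + b`, `a + c`, `b + c`, the law of
cosines gives `1 - cos θ = 2bc / ((a + b)(a + c))` and `1 + cos θ = 2a(a + b + c) / ((a + b)(a + c))`.
Differentiating `arccos` with `b = e^t` then yields
`∂θ_a/∂u_b = abc / ((a + b) √(abc(a + b + c)))`, which is symmetric in `a` and `b`.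
-/

open Real

/-- Inner angle at the vertex of radius `a` in the triangle with side lengths
`a+b, a+c, b+c` formed by three mutually externally tangent circles. -/
noncomputable def ang (a b c : ℝ) : ℝ :=
  Real.arccos (((a + b) ^ 2 + (a + c) ^ 2 - (b + c) ^ 2) / (2 * (a + b) * (a + c)))

/-- `theta i u` is the inner angle at vertex `i` of the triangle formed by three
mutually externally tangent circles of radii `e^(u 0), e^(u 1), e^(u 2)`. -/
noncomputable def theta (i : Fin 3) (u : Fin 3 → ℝ) : ℝ :=
  ang (Real.exp (u i)) (Real.exp (u (i + 1))) (Real.exp (u (i + 2)))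

noncomputable def cosAng (a b c : ℝ) : ℝ :=
  ((a + b) ^ 2 + (a + c) ^ 2 - (b + c) ^ 2) / (2 * (a + b) * (a + c))

section

variable {a b c : ℝ}

lemma one_sub_cosAng (hab : a + b ≠ 0) (hac : a + c ≠ 0) :
    1 - cosAng a b c = 2 * b * c / ((a + b) * (a + c)) := by
  unfold cosAng; field_simp; ring

lemma one_add_cosAng (hab : a + b ≠ 0) (hac : a + c ≠ 0) :
    1 + cosAng a b c = 2 * a * (a + b + c) / ((a + b) * (a + c)) := by
  unfold cosAng; field_simp; ring

lemma sqrt_one_sub_cosAng_sq (ha : 0 < a) (hb : 0 < b) (hc : 0 < c) :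
    √(1 - cosAng a b c ^ 2) = 2 * √(a * b * c * (a + b + c)) / ((a + b) * (a + c)) := by
  have hab : a + b ≠ 0 := by positivity
  have hac : a + c ≠ 0 := by positivity
  have hfactor : 1 - cosAng a b c ^ 2 = (1 - cosAng a b c) * (1 + cosAng a b c) := by ring
  rw [← sqrt_sq (by positivity : 0 ≤ 2 * √(a * b * c * (a + b + c)) / ((a + b) * (a + c))),
    hfactor, one_sub_cosAng hab hac, one_add_cosAng hab hac, div_pow, mul_pow,
    sq_sqrt (by positivity)]
  congr 1
  field_simp

lemma hasDerivAt_cosAng_snd (hab : a + b ≠ 0) (hac : a + c ≠ 0) :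
    HasDerivAt (fun x => cosAng a x c) (-(2 * a * c / ((a + b) ^ 2 * (a + c)))) b := by
  have hnum := ((((hasDerivAt_id' b).const_add a).fun_pow 2).add_const ((a + c) ^ 2)).fun_sub
    (((hasDerivAt_id' b).add_const c).fun_pow 2)
  have hden := (((hasDerivAt_id' b).const_add a).const_mul 2).mul_const (a + c)
  exact (hnum.div hden (by simp [hab, hac])).congr_deriv (by field_simp; ring)

lemma hasDerivAt_ang_snd (ha : 0 < a) (hb : 0 < b) (hc : 0 < c) :
    HasDerivAt (fun x => ang a x c) (a * c / ((a + b) * √(a * b * c * (a + b + c)))) b := by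
  have hab : a + b ≠ 0 := by positivity
  have hac : a + c ≠ 0 := by positivity
  have hgt_neg_one : 0 < 1 + cosAng a b c := by rw [one_add_cosAng hab hac]; positivity
  have hlt_one : 0 < 1 - cosAng a b c := by rw [one_sub_cosAng hab hac]; positivity
  have harccos := hasDerivAt_arccos (by linarith : -1 < cosAng a b c).ne'
    (by linarith : cosAng a b c < 1).ne
  refine (harccos.comp b (hasDerivAt_cosAng_snd hab hac)).congr_deriv ?_
  have : 0 < √(a * b * c * (a + b + c)) := by positivity
  rw [sqrt_one_sub_cosAng_sq ha hb hc]
  field_simp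

lemma deriv_ang_exp (ha : 0 < a) (hc : 0 < c) (t : ℝ) :
    deriv (fun s => ang a (exp s) c) t =
      a * exp t * c / ((a + exp t) * √(a * exp t * c * (a + exp t + c))) :=
  ((hasDerivAt_ang_snd ha (exp_pos t) hc).comp t (hasDerivAt_exp t)).deriv.trans (by ring)

end

lemma deriv_ang_exp_symm (x y z : ℝ) :
    deriv (fun t => ang (exp x) (exp t) (exp z)) y =
      deriv (fun t => ang (exp y) (exp t) (exp z)) x := by
  rw [deriv_ang_exp (exp_pos x) (exp_pos z), deriv_ang_exp (exp_pos y) (exp_pos z)]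
  ring_nf

lemma ang_comm (a b c : ℝ) : ang a b c = ang a c b := by
  unfold ang; ring_nf

-- For `i ≠ j` the third index of `Fin 3` is `-(i + j)`, since `0 + 1 + 2 = 0`.
lemma theta_update_of_ne (u : Fin 3 → ℝ) {i j : Fin 3} (hij : i ≠ j) (t : ℝ) :
    theta i (Function.update u j t) = ang (exp (u i)) (exp t) (exp (u (-(i + j)))) := by
  fin_cases i <;> fin_cases j <;> simp_all [theta, Function.update] <;>
    first | rfl | exact ang_comm _ _ _

theorem stmt_6 (u : Fin 3 → ℝ) (i j : Fin 3) (hij : i ≠ j) :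
    deriv (fun t => theta i (Function.update u j t)) (u j) =
      deriv (fun t => theta j (Function.update u i t)) (u i) := by
  simp only [theta_update_of_ne u hij, theta_update_of_ne u hij.symm, add_comm j i]
  exact deriv_ang_exp_symm _ _ _
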